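/- arXiv:2210.07724 — 3 statements merged into one kernel-verified Lean document; each statement's English description precedes it below -/
import Mathlib

section
/- Limit–colimit coincidence for ω-chains of ep-pairs in ωCPO: given an ω-chain of ωCPOs D₀ → D₁ → D₂ → ⋯ where each connecting map e_n : D_n → D_{n+1} is the embedding of an ep-pair (e_n, p_n), the colimit D of the chain of embeddings exists, the colimit injections ι_n : D_n → D are themselves embeddings of ep-pairs, and the corresponding projections D → D_n form a limit cone over the chain of projections (p_n). -/
/-!
The transition maps `D m → D n` (`m ≤ n`), composites of the `e k`, and their retractions,
composites of the `p k`, are again ep-pairs. The colimit injection `ι n` sends `x` to the compatible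
sequence whose `m`-th term is `x` embedded into some level `N ≥ m, n` and projected down to `D m`;
since `p ∘ e = id` this does not depend on `N`. Suprema in the inverse limit are computed
componentwise because the `p n` are continuous, which makes `ι n` and `π n` continuous;
`e ∘ p ≤ id` gives `ι n (π n d) ≤ d`, and comparing `n`-th components shows that `d` is the least
upper bound of the `ι n (π n d)`.
-/

open OmegaCompletePartialOrder

universe u

/-- The inverse limit of an ω-chain along projections: compatible sequences. -/
def InvLim (D : ℕ → Type u) [∀ n, PartialOrder (D n)]
    (p : ∀ n, D (n + 1) → D n) : Type u :=
  {x : ∀ n, D n // ∀ n, p n (x (n + 1)) = x n}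

instance (D : ℕ → Type u) [∀ n, PartialOrder (D n)] (p : ∀ n, D (n + 1) → D n) :
    PartialOrder (InvLim D p) :=
  inferInstanceAs (PartialOrder {x : ∀ n, D n // ∀ n, p n (x (n + 1)) = x n})

open Set

section EPPair

variable {α β γ : Type*} [OmegaCompletePartialOrder α] [OmegaCompletePartialOrder β]
  [OmegaCompletePartialOrder γ]

theorem ωScottContinuous_iff_isLUB_range {f : α → β} :
    ωScottContinuous f ↔ ∀ (c : ℕ →o α) (a : α),
      IsLUB (range fun k => c k) a → IsLUB (range fun k => f (c k)) (f a) := by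
  refine ⟨fun hf c a ha => ?_, fun h => ?_⟩
  · rw [range_comp' f c]
    exact hf ⟨⟨c⟩, rfl⟩ (range_nonempty _) (Chain.isChain_range ⟨c⟩).directedOn ha
  · rintro _ ⟨c, rfl⟩ - - a ha
    rw [← range_comp' f c]
    exact h c.toOrderHom a ha

structure IsEPPair (e : α → β) (p : β → α) : Prop where
  ωScottContinuous_emb : ωScottContinuous e
  ωScottContinuous_proj : ωScottContinuous p
  proj_emb (x : α) : p (e x) = x
  emb_proj_le (y : β) : e (p y) ≤ y

namespace IsEPPair

protected theorem id : IsEPPair (id : α → α) id :=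
  ⟨.id, .id, fun _ => rfl, fun _ => le_rfl⟩

theorem comp {e₁ : α → β} {p₁ : β → α} {e₂ : β → γ} {p₂ : γ → β}
    (h₁ : IsEPPair e₁ p₁) (h₂ : IsEPPair e₂ p₂) : IsEPPair (e₂ ∘ e₁) (p₁ ∘ p₂) where
  ωScottContinuous_emb := h₂.ωScottContinuous_emb.comp h₁.ωScottContinuous_emb
  ωScottContinuous_proj := h₁.ωScottContinuous_proj.comp h₂.ωScottContinuous_proj
  proj_emb x := by simp only [Function.comp_apply, h₂.proj_emb, h₁.proj_emb]
  emb_proj_le z :=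
    (h₂.ωScottContinuous_emb.monotone (h₁.emb_proj_le _)).trans (h₂.emb_proj_le z)

end IsEPPair

end EPPair

section Transition

variable {D : ℕ → Type u} (e : ∀ n, D n → D (n + 1)) (p : ∀ n, D (n + 1) → D n) {m n N : ℕ}

def embOfLE (h : m ≤ n) (x : D m) : D n :=
  Nat.leRecOn h (fun {k} => e k) x

def projOfLE (h : m ≤ n) (y : D n) : D m :=
  Nat.decreasingInduction (motive := fun k _ => D k) (fun k _ => p k) y h

@[simp]
theorem embOfLE_refl (x : D n) : embOfLE e le_rfl x = x :=
  Nat.leRecOn_self x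

theorem embOfLE_succ (h : m ≤ n) (x : D m) :
    embOfLE e (h.trans n.le_succ) x = e n (embOfLE e h x) :=
  Nat.leRecOn_succ h x

theorem embOfLE_succ_left (h : m + 1 ≤ n) (x : D m) :
    embOfLE e h (e m x) = embOfLE e (m.le_succ.trans h) x :=
  Nat.leRecOn_succ_left x _ h

@[simp]
theorem projOfLE_refl (y : D n) : projOfLE p le_rfl y = y :=
  Nat.decreasingInduction_self _ _

theorem projOfLE_succ (h : m ≤ n) (y : D (n + 1)) :
    projOfLE p (h.trans n.le_succ) y = projOfLE p h (p n y) :=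
  Nat.decreasingInduction_succ _ _ h _

theorem projOfLE_succ_left (h : m + 1 ≤ n) (y : D n) :
    p m (projOfLE p h y) = projOfLE p (m.le_succ.trans h) y :=
  (Nat.decreasingInduction_succ_left _ _ h _).symm

variable {e p}

theorem projOfLE_embOfLE_of_le (hpe : ∀ n x, p n (e n x) = x) (hm : m ≤ N) (hn : n ≤ N)
    {N' : ℕ} (hN : N ≤ N') (x : D n) :
    projOfLE p (hm.trans hN) (embOfLE e (hn.trans hN) x) = projOfLE p hm (embOfLE e hn x) := by
  induction N', hN using Nat.le_induction with
  | base => rfl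
  | succ N' hN ih => rw [← ih, embOfLE_succ e, projOfLE_succ p, hpe]

theorem isEPPair_embOfLE_projOfLE [∀ n, OmegaCompletePartialOrder (D n)]
    (hep : ∀ n, IsEPPair (e n) (p n)) (h : m ≤ n) : IsEPPair (embOfLE e h) (projOfLE p h) := by
  induction n, h using Nat.le_induction with
  | base =>
    rw [show embOfLE e le_rfl = id from funext (embOfLE_refl e),
      show projOfLE p le_rfl = id from funext (projOfLE_refl p)]
    exact .id
  | succ n h ih =>
    rw [show embOfLE e (h.trans n.le_succ) = e n ∘ embOfLE e h from funext (embOfLE_succ e h),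
      show projOfLE p (h.trans n.le_succ) = projOfLE p h ∘ p n from funext (projOfLE_succ p h)]
    exact ih.comp (hep n)

end Transition

namespace InvLim

section PartialOrder

variable {D : ℕ → Type u} [∀ n, PartialOrder (D n)]
  {e : ∀ n, D n → D (n + 1)} {p : ∀ n, D (n + 1) → D n}

theorem isLUB_range_of_forall_isLUB {ι : Type*} {f : ι → InvLim D p} {a : InvLim D p}
    (h : ∀ n, IsLUB (range fun k => (f k).1 n) (a.1 n)) : IsLUB (range f) a := by
  refine ⟨?_, fun b hb n => (h n).2 ?_⟩
  · rintro _ ⟨k, rfl⟩ n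
    exact (h n).1 ⟨k, rfl⟩
  · rintro _ ⟨k, rfl⟩
    exact hb ⟨k, rfl⟩ n

theorem projOfLE_val (d : InvLim D p) {m n : ℕ} (h : m ≤ n) : projOfLE p h (d.1 n) = d.1 m := by
  induction n, h using Nat.le_induction with
  | base => exact projOfLE_refl p _
  | succ n h ih => rw [projOfLE_succ p h, d.2 n, ih]

def incl (hpe : ∀ n x, p n (e n x) = x) (n : ℕ) (x : D n) : InvLim D p :=
  ⟨fun m => projOfLE p (m.le_add_right n) (embOfLE e (n.le_add_left m) x), fun m => by
    rw [projOfLE_succ_left p]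
    exact projOfLE_embOfLE_of_le hpe (m.le_add_right n) (n.le_add_left m) (by omega) x⟩

variable {hpe : ∀ n x, p n (e n x) = x} {m n N : ℕ}

theorem val_incl (hm : m ≤ N) (hn : n ≤ N) (x : D n) :
    (incl hpe n x).1 m = projOfLE p hm (embOfLE e hn x) :=
  (projOfLE_embOfLE_of_le hpe _ _ (by omega : m + n ≤ m + n + N) x).symm.trans
    (projOfLE_embOfLE_of_le hpe hm hn (by omega : N ≤ m + n + N) x)

theorem val_incl_self (x : D n) : (incl hpe n x).1 n = x := by
  rw [val_incl le_rfl le_rfl, embOfLE_refl, projOfLE_refl]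

theorem incl_succ_apply (x : D n) : incl hpe (n + 1) (e n x) = incl hpe n x :=
  Subtype.ext <| funext fun m => by
    rw [val_incl (m.le_add_right (n + 1)) (by omega),
      val_incl (N := m + (n + 1)) (by omega) (by omega), embOfLE_succ_left]

end PartialOrder

variable {D : ℕ → Type u} [∀ n, OmegaCompletePartialOrder (D n)]
  {e : ∀ n, D n → D (n + 1)} {p : ∀ n, D (n + 1) → D n}

/-- Not an instance: it needs the continuity of the `p n`. -/
abbrev omegaCompletePartialOrder (hp : ∀ n, ωScottContinuous (p n)) :
    OmegaCompletePartialOrder (InvLim D p) :=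
  OmegaCompletePartialOrder.subtype _ fun c hc n => by
    change p n (ωSup (c.map (Pi.evalOrderHom (n + 1)))) = ωSup (c.map (Pi.evalOrderHom n))
    rw [(hp n).map_ωSup]
    congr 1
    ext k
    exact hc (c k) ⟨k, rfl⟩ n

theorem exists_isLUB_range (hp : ∀ n, ωScottContinuous (p n)) (c : ℕ →o InvLim D p) :
    ∃ a : InvLim D p, IsLUB (range fun k => c k) a :=
  let _ := omegaCompletePartialOrder hp
  ⟨ωSup ⟨c⟩, isLUB_range_ωSup ⟨c⟩⟩

theorem isLUB_range_iff (hp : ∀ n, ωScottContinuous (p n)) (c : ℕ →o InvLim D p)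
    {a : InvLim D p} :
    IsLUB (range fun k => c k) a ↔ ∀ n, IsLUB (range fun k => (c k).1 n) (a.1 n) := by
  refine ⟨fun ha n => ?_, isLUB_range_of_forall_isLUB⟩
  let _ := omegaCompletePartialOrder hp
  obtain rfl := ha.unique (isLUB_range_ωSup ⟨c⟩)
  exact isLUB_range_ωSup ⟨(Pi.evalOrderHom n).comp ((OrderHom.Subtype.val _).comp c)⟩

variable {hpe : ∀ n x, p n (e n x) = x} (hep : ∀ n, IsEPPair (e n) (p n))
include hep

theorem incl_val_le (d : InvLim D p) (n : ℕ) : incl hpe n (d.1 n) ≤ d := fun m => by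
  have hN := n.le_add_left m
  calc (incl hpe n (d.1 n)).1 m
      = projOfLE p (m.le_add_right n) (embOfLE e hN (projOfLE p hN (d.1 (m + n)))) := by
        rw [val_incl _ hN, projOfLE_val]
    _ ≤ projOfLE p (m.le_add_right n) (d.1 (m + n)) :=
        (isEPPair_embOfLE_projOfLE hep _).ωScottContinuous_proj.monotone
          ((isEPPair_embOfLE_projOfLE hep hN).emb_proj_le _)
    _ = d.1 m := projOfLE_val d _

theorem isLUB_range_incl_val (d : InvLim D p) :
    IsLUB (range fun n => incl hpe n (d.1 n)) d := by
  refine ⟨?_, fun b hb m => ?_⟩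
  · rintro _ ⟨n, rfl⟩
    exact incl_val_le hep d n
  · simpa only [val_incl_self] using hb ⟨m, rfl⟩ m

theorem ωScottContinuous_val_incl (n m : ℕ) :
    ωScottContinuous fun x : D n => (incl hpe n x).1 m := by
  simp only [val_incl (m.le_add_right n) (n.le_add_left m)]
  exact (isEPPair_embOfLE_projOfLE hep _).ωScottContinuous_proj.comp
    (isEPPair_embOfLE_projOfLE hep _).ωScottContinuous_emb

theorem monotone_incl (n : ℕ) : Monotone (incl hpe n) := fun _ _ hxy m =>
  (ωScottContinuous_val_incl hep n m).monotone hxy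

theorem isLUB_range_incl {n : ℕ} (c : ℕ →o D n) {a : D n} (ha : IsLUB (range fun k => c k) a) :
    IsLUB (range fun k => incl hpe n (c k)) (incl hpe n a) :=
  isLUB_range_of_forall_isLUB fun m =>
    ωScottContinuous_iff_isLUB_range.1 (ωScottContinuous_val_incl hep n m) c a ha

end InvLim

theorem limit_colimit_coincidence_general (D : ℕ → Type u)
    [∀ n, OmegaCompletePartialOrder (D n)]
    (e : ∀ n, D n → D (n + 1)) (p : ∀ n, D (n + 1) → D n)
    (hecont : ∀ n (c : ℕ →o D n) (a : D n), IsLUB (Set.range fun k => c k) a →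
      IsLUB (Set.range fun k => e n (c k)) (e n a))
    (hpcont : ∀ n (c : ℕ →o D (n + 1)) (a : D (n + 1)),
      IsLUB (Set.range fun k => c k) a →
        IsLUB (Set.range fun k => p n (c k)) (p n a))
    (hpe : ∀ n x, p n (e n x) = x) (hep : ∀ n y, e n (p n y) ≤ y) :
    (∀ c : ℕ →o InvLim D p, ∃ a : InvLim D p, IsLUB (Set.range fun k => c k) a) ∧
    ∃ (ι : ∀ n, D n → InvLim D p) (π : ∀ n, InvLim D p → D n),
      (∀ n, Monotone (ι n)) ∧ (∀ n, Monotone (π n)) ∧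
      (∀ n (c : ℕ →o D n) (a : D n), IsLUB (Set.range fun k => c k) a →
        IsLUB (Set.range fun k => ι n (c k)) (ι n a)) ∧
      (∀ n (c : ℕ →o InvLim D p) (a : InvLim D p),
        IsLUB (Set.range fun k => c k) a →
          IsLUB (Set.range fun k => π n (c k)) (π n a)) ∧
      (∀ n x, π n (ι n x) = x) ∧ (∀ n d, ι n (π n d) ≤ d) ∧
      (∀ n x, ι (n + 1) (e n x) = ι n x) ∧
      (∀ n d, p n (π (n + 1) d) = π n d) ∧
      (∀ d : InvLim D p, IsLUB (Set.range fun n => ι n (π n d)) d) ∧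
      (∀ x : ∀ n, D n, (∀ n, p n (x (n + 1)) = x n) →
        ∃! d : InvLim D p, ∀ n, π n d = x n) := by
  have hp n : ωScottContinuous (p n) := ωScottContinuous_iff_isLUB_range.2 (hpcont n)
  have hEP n : IsEPPair (e n) (p n) :=
    ⟨ωScottContinuous_iff_isLUB_range.2 (hecont n), hp n, hpe n, hep n⟩
  refine ⟨InvLim.exists_isLUB_range hp, InvLim.incl hpe, fun n d => d.1 n,
    InvLim.monotone_incl hEP, fun n _ _ h => h n,
    fun n => InvLim.isLUB_range_incl hEP,
    fun n c _ ha => (InvLim.isLUB_range_iff hp c).1 ha n,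
    fun n => InvLim.val_incl_self, fun n d => InvLim.incl_val_le hEP d n,
    fun n => InvLim.incl_succ_apply, fun n d => d.2 n,
    InvLim.isLUB_range_incl_val hEP,
    fun x hx => ⟨⟨x, hx⟩, fun n => rfl, fun d hd => Subtype.ext (funext hd)⟩⟩

/-- Limit–colimit coincidence for ω-chains of ep-pairs in ωCPO: given an
ω-chain of ωCPOs whose connecting maps are embeddings of ep-pairs `(e n, p n)`,
the inverse limit `InvLim D p` is an ωCPO (every ω-chain in it has a least
upper bound), it is a colimit of the chain of embeddings with colimit
injections `ι n` that are themselves embeddings of ep-pairs with projections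
`π n` (in particular every element is the least upper bound of the chain
`ι n (π n d)`), both `ι n` and `π n` are monotone and ω-continuous, and the
`π n` form a limit cone over the chain of projections. -/
theorem limit_colimit_coincidence (D : ℕ → Type u)
    [∀ n, OmegaCompletePartialOrder (D n)]
    (e : ∀ n, D n → D (n + 1)) (p : ∀ n, D (n + 1) → D n)
    (hemono : ∀ n, Monotone (e n)) (hpmono : ∀ n, Monotone (p n))
    (hecont : ∀ n (c : ℕ →o D n) (a : D n), IsLUB (Set.range fun k => c k) a →
      IsLUB (Set.range fun k => e n (c k)) (e n a))
    (hpcont : ∀ n (c : ℕ →o D (n + 1)) (a : D (n + 1)),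
      IsLUB (Set.range fun k => c k) a →
        IsLUB (Set.range fun k => p n (c k)) (p n a))
    (hpe : ∀ n x, p n (e n x) = x) (hep : ∀ n y, e n (p n y) ≤ y) :
    (∀ c : ℕ →o InvLim D p, ∃ a : InvLim D p, IsLUB (Set.range fun k => c k) a) ∧
    ∃ (ι : ∀ n, D n → InvLim D p) (π : ∀ n, InvLim D p → D n),
      (∀ n, Monotone (ι n)) ∧ (∀ n, Monotone (π n)) ∧
      (∀ n (c : ℕ →o D n) (a : D n), IsLUB (Set.range fun k => c k) a →
        IsLUB (Set.range fun k => ι n (c k)) (ι n a)) ∧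
      (∀ n (c : ℕ →o InvLim D p) (a : InvLim D p),
        IsLUB (Set.range fun k => c k) a →
          IsLUB (Set.range fun k => π n (c k)) (π n a)) ∧
      (∀ n x, π n (ι n x) = x) ∧ (∀ n d, ι n (π n d) ≤ d) ∧
      (∀ n x, ι (n + 1) (e n x) = ι n x) ∧
      (∀ n d, p n (π (n + 1) d) = π n d) ∧
      (∀ d : InvLim D p, IsLUB (Set.range fun n => ι n (π n d)) d) ∧
      (∀ x : ∀ n, D n, (∀ n, p n (x (n + 1)) = x n) →
        ∃! d : InvLim D p, ∀ n, π n d = x n) :=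
  limit_colimit_coincidence_general D e p hecont hpcont hpe hep
end

section
/- PAP functions are closed under composition: if f : U → V and g : V → W are PAP functions (U ⊆ ℝⁿ, V ⊆ ℝᵐ, W ⊆ ℝᵏ), then g ∘ f : U → W is PAP. -/
/-!
Refine the partition of `U` underlying `f` by pulling back the partition of `V` underlying `g`:
the pieces are `Aᵢ ∩ fᵢ⁻¹(Bⱼ)`, on a neighbourhood of which `g ∘ f` agrees with the analytic
map `gⱼ ∘ fᵢ`. These pieces are analytic sets because analytic sets are stable under finite
intersections and under preimages by analytic maps, and the doubly indexed family is
reindexed by `ℕ` through the pairing bijection `ℕ × ℕ ≃ ℕ`.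
-/

/-- A subset of `ℝⁿ` is analytic if it is carved out of an open neighbourhood
by finitely many inequalities `gᵢ ≥ 0` with `gᵢ` real-analytic. -/
def IsAnalyticSet {n : ℕ} (A : Set (Fin n → ℝ)) : Prop :=
  ∃ (U : Set (Fin n → ℝ)) (m : ℕ) (g : Fin m → ((Fin n → ℝ) → ℝ)),
    IsOpen U ∧ A ⊆ U ∧ (∀ i, AnalyticOnNhd ℝ (g i) U) ∧
      A = {x ∈ U | ∀ i, 0 ≤ g i x}

/-- `f : U → V` is PAP (piecewise analytic under analytic partition): there is
a countable family of analytic sets `A i` partitioning `U`, open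
neighbourhoods `Uo i ⊇ A i`, and real-analytic `fi i : Uo i → ℝᵐ` agreeing
with `f` on `A i` and landing in `V` there. -/
def IsPAP {n m : ℕ} (U : Set (Fin n → ℝ)) (V : Set (Fin m → ℝ))
    (f : (Fin n → ℝ) → (Fin m → ℝ)) : Prop :=
  ∃ (A : ℕ → Set (Fin n → ℝ)) (Uo : ℕ → Set (Fin n → ℝ))
    (fi : ℕ → ((Fin n → ℝ) → (Fin m → ℝ))),
      (∀ i, IsAnalyticSet (A i)) ∧ Pairwise (Function.onFun Disjoint A) ∧ (⋃ i, A i) = U ∧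
      (∀ i, IsOpen (Uo i)) ∧ (∀ i, A i ⊆ Uo i) ∧
      (∀ i, AnalyticOnNhd ℝ (fi i) (Uo i)) ∧
      (∀ i, ∀ x ∈ A i, fi i x = f x) ∧
      (∀ i, ∀ x ∈ A i, fi i x ∈ V)

open Set Function

namespace IsAnalyticSet

variable {n p : ℕ}

theorem inter {A A' : Set (Fin n → ℝ)} (hA : IsAnalyticSet A) (hA' : IsAnalyticSet A') :
    IsAnalyticSet (A ∩ A') := by
  obtain ⟨U, m, g, hU, hAU, hg, rfl⟩ := hA
  obtain ⟨U', m', g', hU', hAU', hg', rfl⟩ := hA'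
  refine ⟨U ∩ U', m + m', Fin.append g g', hU.inter hU',
    inter_subset_inter hAU hAU', ?_, ?_⟩
  · refine Fin.addCases (fun i => ?_) (fun j => ?_)
    · simpa only [Fin.append_left] using (hg i).mono inter_subset_left
    · simpa only [Fin.append_right] using (hg' j).mono inter_subset_right
  · ext x
    simp only [mem_inter_iff, mem_ofPred_eq, Fin.forall_fin_add, Fin.append_left,
      Fin.append_right]
    tauto

theorem inter_preimage {O : Set (Fin n → ℝ)} {φ : (Fin n → ℝ) → (Fin p → ℝ)}
    {B : Set (Fin p → ℝ)} (hB : IsAnalyticSet B) (hO : IsOpen O) (hφ : AnalyticOnNhd ℝ φ O) :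
    IsAnalyticSet (O ∩ φ ⁻¹' B) := by
  obtain ⟨V, m, g, hV, hBV, hg, rfl⟩ := hB
  refine ⟨O ∩ φ ⁻¹' V, m, fun i => g i ∘ φ, hφ.continuousOn.isOpen_inter_preimage hO hV,
    inter_subset_inter_right _ (preimage_mono hBV),
    fun i => (hg i).comp (hφ.mono inter_subset_left) fun x hx => hx.2, ?_⟩
  ext x
  simp only [mem_inter_iff, mem_preimage, mem_ofPred_eq, comp_apply]
  tauto

theorem inter_preimage_of_subset {A O : Set (Fin n → ℝ)} {φ : (Fin n → ℝ) → (Fin p → ℝ)}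
    {B : Set (Fin p → ℝ)} (hA : IsAnalyticSet A) (hB : IsAnalyticSet B) (hO : IsOpen O)
    (hAO : A ⊆ O) (hφ : AnalyticOnNhd ℝ φ O) : IsAnalyticSet (A ∩ φ ⁻¹' B) := by
  rw [← inter_eq_left.mpr hAO, inter_assoc]
  exact hA.inter (hB.inter_preimage hO hφ)

end IsAnalyticSet

theorem isPAP_of_equiv {ι : Type*} {n m : ℕ} {U : Set (Fin n → ℝ)} {V : Set (Fin m → ℝ)}
    {f : (Fin n → ℝ) → (Fin m → ℝ)} (e : ι ≃ ℕ) (A Uo : ι → Set (Fin n → ℝ))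
    (fi : ι → (Fin n → ℝ) → (Fin m → ℝ)) (hA : ∀ i, IsAnalyticSet (A i))
    (hAd : Pairwise (Disjoint on A)) (hAU : ⋃ i, A i = U) (hUo : ∀ i, IsOpen (Uo i))
    (hAUo : ∀ i, A i ⊆ Uo i) (hfi : ∀ i, AnalyticOnNhd ℝ (fi i) (Uo i))
    (hfi_eq : ∀ i, ∀ x ∈ A i, fi i x = f x) (hfi_mem : ∀ i, ∀ x ∈ A i, fi i x ∈ V) :
    IsPAP U V f :=
  ⟨A ∘ e.symm, Uo ∘ e.symm, fi ∘ e.symm, fun _ => hA _, hAd.comp_of_injective e.symm.injective,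
    (e.symm.surjective.iUnion_comp A).trans hAU, fun _ => hUo _, fun _ => hAUo _,
    fun _ => hfi _, fun _ => hfi_eq _, fun _ => hfi_mem _⟩

section Refinement

variable {ι κ α β : Type*} {A : ι → Set α} {B : κ → Set β} {φ : ι → α → β}

theorem pairwise_disjoint_inter_preimage (hA : Pairwise (Disjoint on A))
    (hB : Pairwise (Disjoint on B)) :
    Pairwise (Disjoint on fun p : ι × κ => A p.1 ∩ φ p.1 ⁻¹' B p.2) := by
  rintro ⟨i, j⟩ ⟨i', j'⟩ hne
  by_cases hi : i = i'
  · subst hi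
    have hj : j ≠ j' := fun hj => hne (hj ▸ rfl)
    exact ((hB hj).preimage _).mono inter_subset_right inter_subset_right
  · exact (hA hi).mono inter_subset_left inter_subset_left

theorem iUnion_inter_preimage {U : Set α} {V : Set β} (hAU : ⋃ i, A i = U)
    (hBV : ⋃ j, B j = V) (hφ : ∀ i, MapsTo (φ i) (A i) V) :
    ⋃ p : ι × κ, A p.1 ∩ φ p.1 ⁻¹' B p.2 = U := by
  simp_rw [iUnion_prod', ← inter_iUnion, ← preimage_iUnion, hBV]
  rw [← hAU]
  exact iUnion_congr fun i => inter_eq_left.mpr (hφ i).subset_preimage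

end Refinement

/-- PAP functions are closed under composition. -/
theorem isPAP_comp {n m k : ℕ} {U : Set (Fin n → ℝ)} {V : Set (Fin m → ℝ)}
    {W : Set (Fin k → ℝ)} {f : (Fin n → ℝ) → (Fin m → ℝ)}
    {g : (Fin m → ℝ) → (Fin k → ℝ)}
    (hf : IsPAP U V f) (hg : IsPAP V W g) : IsPAP U W (g ∘ f) := by
  obtain ⟨A, Uo, fi, hA, hAd, hAU, hUo, hAUo, hfi, hfi_eq, hfi_mem⟩ := hf
  obtain ⟨B, Vo, gi, hB, hBd, hBV, hVo, hBVo, hgi, hgi_eq, hgi_mem⟩ := hg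
  refine isPAP_of_equiv Nat.pairEquiv (fun p => A p.1 ∩ fi p.1 ⁻¹' B p.2)
    (fun p => Uo p.1 ∩ fi p.1 ⁻¹' Vo p.2) (fun p => gi p.2 ∘ fi p.1)
    (fun p => (hA p.1).inter_preimage_of_subset (hB p.2) (hUo p.1) (hAUo p.1) (hfi p.1))
    (pairwise_disjoint_inter_preimage hAd hBd) (iUnion_inter_preimage hAU hBV hfi_mem)
    (fun p => (hfi p.1).continuousOn.isOpen_inter_preimage (hUo p.1) (hVo p.2))
    (fun p => inter_subset_inter (hAUo p.1) (preimage_mono (hBVo p.2)))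
    (fun p => (hgi p.2).comp ((hfi p.1).mono inter_subset_left) fun x hx => hx.2)
    ?_ fun p x hx => hgi_mem p.2 _ hx.2
  rintro p x ⟨hxA, hxB⟩
  simp only [comp_apply, ← hfi_eq p.1 x hxA]
  exact hgi_eq p.2 _ hxB
end

section
/- Let (f_k) be an increasing ω-chain of partial functions ℝⁿ ⇀ ℝᵐ (flat extension order) such that each f_k has open domain U_k, is differentiable on U_k, and its paired derivative candidate ḟ_k equals the true derivative of f_k on U_k × ℝⁿ. Then the supremum f = ⊔_k f_k has open domain U = ⋃_k U_k, is differentiable on U, and its derivative at x ∈ U equals the derivative of f_k at x for any k with x ∈ U_k. -/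
/-! The supremum agrees with `f k` on the open set `U k`, and a derivative only depends on the
germ of a function, so on `U k` the supremum inherits the derivative of `f k`. -/

open Set Filter

section ChainSup

variable {α β : Type*} {U : ℕ → Set α} {f : ℕ → α → β}

theorem chain_eqOn_of_le (hmono : ∀ k, U k ⊆ U (k + 1))
    (hext : ∀ k, EqOn (f (k + 1)) (f k) (U k)) {j k : ℕ} (hjk : j ≤ k) :
    EqOn (f k) (f j) (U j) := by
  induction hjk with
  | refl => exact eqOn_refl _ _
  | step hjl ih => exact fun x hx => (hext _ (monotone_nat_of_le_succ hmono hjl hx)).trans (ih hx)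

/-- Outside `⋃ k, U k` the value is the junk `0`. -/
noncomputable def chainSup [Zero β] (U : ℕ → Set α) (f : ℕ → α → β) (x : α) : β :=
  open Classical in if h : ∃ k, x ∈ U k then f (Nat.find h) x else 0

theorem eqOn_chainSup [Zero β] (hmono : ∀ k, U k ⊆ U (k + 1))
    (hext : ∀ k, EqOn (f (k + 1)) (f k) (U k)) (k : ℕ) : EqOn (chainSup U f) (f k) (U k) := by
  classical
  intro x hx
  have h : ∃ j, x ∈ U j := ⟨k, hx⟩
  rw [chainSup, dif_pos h]
  exact (chain_eqOn_of_le hmono hext (Nat.find_le hx) (Nat.find_spec h)).symm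

end ChainSup

theorem hasFDerivAt_chainSup {𝕜 E F : Type*} [NontriviallyNormedField 𝕜]
    [NormedAddCommGroup E] [NormedSpace 𝕜 E] [NormedAddCommGroup F] [NormedSpace 𝕜 F]
    {U : ℕ → Set E} {f : ℕ → E → F} (hopen : ∀ k, IsOpen (U k))
    (hmono : ∀ k, U k ⊆ U (k + 1)) (hext : ∀ k, EqOn (f (k + 1)) (f k) (U k))
    {k : ℕ} {x : E} {f' : E →L[𝕜] F} (hx : x ∈ U k) (hf : HasFDerivAt (f k) f' x) :
    HasFDerivAt (chainSup U f) f' x :=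
  hf.congr_of_eventuallyEq <|
    eventuallyEq_of_mem ((hopen k).mem_nhds hx) (eqOn_chainSup hmono hext k)

/-- ω-chain closure of the differentiability logical relation: given an
increasing ω-chain of partial functions `ℝⁿ ⇀ ℝᵐ` (represented by open
domains `U k` and total functions `f k` considered on `U k`, extending one
another), each differentiable on its domain with its paired derivative
candidate `df k` equal to the true derivative there, the supremum has open
domain `⋃ k, U k`, extends every `f k`, is differentiable on its domain, and
its derivative at `x ∈ U k` equals the derivative of `f k` at `x`. -/
theorem chain_sup_differentiable {n m : ℕ}
    (U : ℕ → Set (Fin n → ℝ)) (f : ℕ → ((Fin n → ℝ) → (Fin m → ℝ)))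
    (df : ℕ → ((Fin n → ℝ) → ((Fin n → ℝ) →L[ℝ] (Fin m → ℝ))))
    (hopen : ∀ k, IsOpen (U k))
    (hmono : ∀ k, U k ⊆ U (k + 1))
    (hext : ∀ k, Set.EqOn (f (k + 1)) (f k) (U k))
    (hdiff : ∀ k, ∀ x ∈ U k, HasFDerivAt (f k) (df k x) x) :
    IsOpen (⋃ k, U k) ∧
      ∃ F : (Fin n → ℝ) → (Fin m → ℝ),
        (∀ k, Set.EqOn F (f k) (U k)) ∧
        (∀ x ∈ ⋃ k, U k, DifferentiableAt ℝ F x) ∧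
        (∀ k, ∀ x ∈ U k, fderiv ℝ F x = df k x) := by
  have hF : ∀ k, ∀ x ∈ U k, HasFDerivAt (chainSup U f) (df k x) x := fun k x hx =>
    hasFDerivAt_chainSup hopen hmono hext hx (hdiff k x hx)
  refine ⟨isOpen_iUnion hopen, chainSup U f, eqOn_chainSup hmono hext, ?_,
    fun k x hx => (hF k x hx).fderiv⟩
  intro x hx
  obtain ⟨k, hk⟩ := mem_iUnion.1 hx
  exact (hF k x hk).differentiableAt
end
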